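/- Let 0 < β < 1, let t be a β-balanced full binary tree with n leaves, let k ≥ 1, and let top(t,k) be the tree obtained from t by removing all nodes whose leaf size is at most k. Then the number of nodes of top(t,k) is at most 2·c·n/k, where c = 2·log_{1+β}(β⁻¹) + 2. -/

import Mathlib

universe u

/-- Full binary trees: every node carries a label and has either `0` or `2`
(ordered) children. -/
inductive BTree (L : Type u) : Type u
  | leaf : L → BTree L
  | node : L → BTree L → BTree L → BTree L

namespace BTree

/-- The number of leaves of a full binary tree. -/
def numLeaves {L : Type u} : BTree L → ℕ
  | .leaf _ => 1
  | .node _ l r => l.numLeaves + r.numLeaves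

/-- The subtree rooted at the node addressed by the position `p`
(`false` = go to the left child, `true` = go to the right child), if `p` is a
valid position. -/
def subt {L : Type u} : BTree L → List Bool → Option (BTree L)
  | t, [] => some t
  | .leaf _, _ :: _ => none
  | .node _ l r, b :: p => if b then r.subt p else l.subt p

/-- `p` addresses a node of `t`. -/
def IsNode {L : Type u} (t : BTree L) (p : List Bool) : Prop := (t.subt p).isSome

/-- `p` addresses an inner node of `t`. -/
def IsInner {L : Type u} (t : BTree L) (p : List Bool) : Prop :=
  ∃ (a : L) (l r : BTree L), t.subt p = some (.node a l r)

/-- The leaf size of the node of `t` addressed by `p`: the number of leaves of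
the subtree rooted there. -/
def leafSizeAt {L : Type u} (t : BTree L) (p : List Bool) : ℕ :=
  ((t.subt p).map numLeaves).getD 0

/-- The inner node of `t` addressed by `p` is `β`-balanced: its two children
have leaf sizes `n₁, n₂` with `n₁ ≥ β·n₂` and `n₂ ≥ β·n₁`. -/
def BalancedAt {L : Type u} (β : ℝ) (t : BTree L) (p : List Bool) : Prop :=
  ∃ (a : L) (l r : BTree L), t.subt p = some (.node a l r) ∧
    β * (l.numLeaves : ℝ) ≤ (r.numLeaves : ℝ) ∧
    β * (r.numLeaves : ℝ) ≤ (l.numLeaves : ℝ)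

/-- A tree is `β`-balanced if for all inner nodes `u`, `v` such that `v` is a
child of `u`, at least one of `u`, `v` is `β`-balanced. -/
def BetaBalanced {L : Type u} (β : ℝ) (t : BTree L) : Prop :=
  ∀ (p : List Bool) (b : Bool), t.IsInner p → t.IsInner (p ++ [b]) →
    t.BalancedAt β p ∨ t.BalancedAt β (p ++ [b])

/-- `Subtree s t` holds iff `s` is the subtree of `t` rooted at some node
of `t`. -/
inductive Subtree {L : Type u} : BTree L → BTree L → Prop
  | refl (t : BTree L) : Subtree t t
  | left {s l r : BTree L} {a : L} : Subtree s l → Subtree s (.node a l r)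
  | right {s l r : BTree L} {a : L} : Subtree s r → Subtree s (.node a l r)

end BTree

namespace BTree

/-- `p` addresses a node of `top(t,k)`, i.e. a node of `t` whose leaf size
exceeds `k`. -/
def InTop {L : Type u} (t : BTree L) (k : ℕ) (p : List Bool) : Prop :=
  t.IsNode p ∧ k < t.leafSizeAt p

/-- `p` is a child of `q` in `top(t,k)`: both are nodes of `top(t,k)`, `q` is
a proper ancestor of `p`, and no node of `top(t,k)` lies strictly between
them. -/
def TopChild {L : Type u} (t : BTree L) (k : ℕ) (p q : List Bool) : Prop :=
  t.InTop k p ∧ t.InTop k q ∧ q <+: p ∧ q ≠ p ∧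
    ∀ x : List Bool, t.InTop k x → q <+: x → x <+: p → x = q ∨ x = p

/-- `p` is the unique child of `q` in `top(t,k)`. -/
def UniqueTopChild {L : Type u} (t : BTree L) (k : ℕ) (p q : List Bool) : Prop :=
  t.TopChild k p q ∧ ∀ x : List Bool, t.TopChild k x q → x = p

end BTree

/-!
Let `c ≥ 2` and `c·β ≥ 1`. By induction on `t` one shows `k·(|top(t,k)| + c) ≤ 2c·n`
whenever `k < n`, with an extra `k` of slack when the root of `t` is `β`-balanced. A node of
`top(t,k)` with both children in `top(t,k)` is paid for by `c ≥ 2`, and one with no child in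
`top(t,k)` by `n ≥ k + 1`. A node with a single child `s` in `top(t,k)` is paid for by the slack
of `s` when `s` is balanced; otherwise the node itself is balanced, so its other subtree has at
least `β·k` leaves and contributes `2c·β ≥ 2` to the bound. The constant
`c = 2·log_{1+β}(β⁻¹) + 2` satisfies `c·β ≥ 2` because `log (1 + β) ≤ β` and
`log β⁻¹ ≥ 1 - β`.
-/

namespace BTree

variable {L : Type u}

def topCard : BTree L → ℕ → ℕ
  | .leaf _, k => if k < 1 then 1 else 0
  | .node _ l r, k =>
      (if k < l.numLeaves + r.numLeaves then 1 else 0) + l.topCard k + r.topCard k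

theorem numLeaves_pos (t : BTree L) : 0 < t.numLeaves := by
  induction t with
  | leaf _ => simp [numLeaves]
  | node _ l r _ _ => simp only [numLeaves]; omega

theorem topCard_eq_zero {t : BTree L} {k : ℕ} (h : t.numLeaves ≤ k) : t.topCard k = 0 := by
  induction t with
  | leaf _ => exact if_neg (by simp only [numLeaves] at h; omega)
  | node _ l r ihl ihr =>
      simp only [numLeaves] at h
      rw [topCard, if_neg (by omega), ihl (by omega), ihr (by omega)]

theorem inTop_iff (t : BTree L) (k : ℕ) (p : List Bool) :
    t.InTop k p ↔ ∃ s, t.subt p = some s ∧ k < s.numLeaves := by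
  unfold InTop IsNode leafSizeAt
  cases t.subt p <;> simp

theorem setOf_inTop_leaf (x : L) (k : ℕ) :
    {p | (leaf x).InTop k p} = {p | p = [] ∧ k < 1} := by
  ext (_ | ⟨_, _⟩) <;> simp [inTop_iff, subt, numLeaves]

theorem setOf_inTop_node (a : L) (l r : BTree L) (k : ℕ) :
    {p | (node a l r).InTop k p} = {p | p = [] ∧ k < l.numLeaves + r.numLeaves} ∪
      (List.cons false '' {p | l.InTop k p} ∪ List.cons true '' {p | r.InTop k p}) := by
  ext (_ | ⟨_ | _, p⟩) <;> simp [inTop_iff, subt, numLeaves]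

theorem encard_nil_and (q : Prop) [Decidable q] :
    {p : List Bool | p = [] ∧ q}.encard = if q then 1 else 0 := by
  split_ifs with h <;> simp [h]

theorem encard_setOf_inTop (t : BTree L) (k : ℕ) : {p | t.InTop k p}.encard = t.topCard k := by
  induction t with
  | leaf x => rw [setOf_inTop_leaf, encard_nil_and, topCard]; split_ifs <;> simp
  | node a l r ihl ihr =>
      have hroot : Disjoint {p : List Bool | p = [] ∧ k < l.numLeaves + r.numLeaves}
          (List.cons false '' {p | l.InTop k p} ∪ List.cons true '' {p | r.InTop k p}) := by
        rw [Set.disjoint_left]; rintro _ ⟨rfl, -⟩ (⟨_, -, h⟩ | ⟨_, -, h⟩) <;> cases h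
      have hchildren : Disjoint (List.cons false '' {p | l.InTop k p})
          (List.cons true '' {p | r.InTop k p}) := by
        rw [Set.disjoint_left]; rintro _ ⟨_, -, rfl⟩ ⟨_, -, h⟩; cases h
      rw [setOf_inTop_node, Set.encard_union_eq hroot, Set.encard_union_eq hchildren,
        List.cons_injective.encard_image, List.cons_injective.encard_image, ihl, ihr,
        encard_nil_and, topCard]
      split_ifs <;> push_cast <;> ring

theorem ncard_setOf_inTop (t : BTree L) (k : ℕ) : {p | t.InTop k p}.ncard = t.topCard k := by
  simp [Set.ncard_def, encard_setOf_inTop]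

theorem subt_node_cons (a : L) (l r : BTree L) (b : Bool) (p : List Bool) :
    (node a l r).subt (b :: p) = (cond b r l).subt p := by
  cases b <;> rfl

theorem isInner_nil_iff (t : BTree L) : t.IsInner [] ↔ 1 < t.numLeaves := by
  cases t with
  | leaf => simp [IsInner, subt, numLeaves]
  | node _ l r =>
    have := l.numLeaves_pos
    have := r.numLeaves_pos
    exact iff_of_true ⟨_, _, _, rfl⟩ (by simp only [numLeaves]; omega)

theorem balancedAt_nil_node {β : ℝ} (a : L) (l r : BTree L) :
    (node a l r).BalancedAt β [] ↔
      β * l.numLeaves ≤ r.numLeaves ∧ β * r.numLeaves ≤ l.numLeaves := by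
  simp [BalancedAt, subt]

theorem BetaBalanced.child {β : ℝ} {a : L} {l r : BTree L} (h : (node a l r).BetaBalanced β)
    (b : Bool) : (cond b r l).BetaBalanced β := by
  intro p b' hp hpb
  simpa only [BalancedAt, IsInner, List.cons_append, subt_node_cons] using
    h (b :: p) b' (by simpa only [IsInner, subt_node_cons] using hp)
      (by simpa only [IsInner, List.cons_append, subt_node_cons] using hpb)

theorem BetaBalanced.balancedAt_child {β : ℝ} {a : L} {l r : BTree L}
    (h : (node a l r).BetaBalanced β) (hroot : ¬ (node a l r).BalancedAt β []) (b : Bool)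
    (hb : 1 < (cond b r l).numLeaves) : (cond b r l).BalancedAt β [] := by
  have hinner : (node a l r).IsInner [b] := by
    simpa only [IsInner, subt_node_cons] using (isInner_nil_iff _).2 hb
  simpa only [BalancedAt, List.nil_append, subt_node_cons] using
    (h [] b ((isInner_nil_iff _).2 (by simp only [numLeaves]; linarith [l.numLeaves_pos,
      r.numLeaves_pos])) hinner).resolve_left hroot

end BTree

/-- The inductive step at a node whose children have `n > k` and `m` leaves, the top of the
first child having `x` nodes and the second child not reaching the top. -/
theorem mul_add_le_of_one_large {k c β x n m : ℝ} (hk : 0 ≤ k) (hc : 0 ≤ c) (hm : 0 ≤ m)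
    (hcβ : 1 ≤ c * β) (hkn : k < n) (ih : k * (x + c) ≤ 2 * c * n)
    (hslack : (β * n ≤ m ∧ β * m ≤ n) ∨ k * (x + c + 1) ≤ 2 * c * n) :
    k * (1 + x + c) ≤ 2 * c * (n + m) ∧
      (β * n ≤ m ∧ β * m ≤ n → k * (1 + x + c + 1) ≤ 2 * c * (n + m)) := by
  have hsmall : β * n ≤ m → k ≤ c * m := fun h => by nlinarith
  refine ⟨?_, fun h => by nlinarith [hsmall h.1]⟩
  rcases hslack with h | h
  · nlinarith [hsmall h.1]
  · nlinarith

theorem one_sub_le_mul_logb_one_add {β : ℝ} (hβ0 : 0 < β) (hβ1 : β < 1) :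
    1 - β ≤ β * Real.logb (1 + β) β⁻¹ := by
  have hpos : 0 < Real.log (1 + β) := Real.log_pos (by linarith)
  have hle : Real.log (1 + β) ≤ β := by
    linarith [Real.log_le_sub_one_of_pos (show 0 < 1 + β by linarith)]
  have hinv : 1 - β ≤ Real.log β⁻¹ := by
    simpa using Real.one_sub_inv_le_log_of_pos (inv_pos.2 hβ0)
  rw [Real.logb, ← mul_div_assoc, le_div_iff₀ hpos]
  nlinarith [mul_le_mul_of_nonneg_left hle (show 0 ≤ Real.log β⁻¹ by linarith)]

namespace BTree

variable {L : Type u}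

theorem mul_topCard_add_le {β c : ℝ} {k : ℕ} (hk : 1 ≤ k) (hc : 2 ≤ c)
    (hcβ : 1 ≤ c * β) (t : BTree L) (hbal : t.BetaBalanced β) (hkt : k < t.numLeaves) :
    k * (t.topCard k + c) ≤ 2 * c * t.numLeaves ∧
      (t.BalancedAt β [] → k * (t.topCard k + c + 1) ≤ 2 * c * t.numLeaves) := by
  induction t with
  | leaf => simp only [numLeaves] at hkt; omega
  | node a l r ihl ihr =>
    have hl₀ : (0 : ℝ) ≤ l.numLeaves := by positivity
    have hr₀ : (0 : ℝ) ≤ r.numLeaves := by positivity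
    simp only [numLeaves] at hkt ⊢
    rw [topCard, if_pos hkt, balancedAt_nil_node]
    push_cast
    have ihl := fun h => ihl (hbal.child false) h
    have ihr := fun h => ihr (hbal.child true) h
    have hchild := hbal.balancedAt_child
    rw [balancedAt_nil_node] at hchild
    rcases lt_or_ge k l.numLeaves with hl | hl <;> rcases lt_or_ge k r.numLeaves with hr | hr
    · obtain ⟨ihl, -⟩ := ihl hl
      obtain ⟨ihr, -⟩ := ihr hr
      constructor <;> intros <;> nlinarith
    · rw [topCard_eq_zero hr]
      have hkl : (k : ℝ) < l.numLeaves := by exact_mod_cast hl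
      simpa using
        mul_add_le_of_one_large (by positivity) (by positivity) hr₀ hcβ hkl (ihl hl).1
        (or_iff_not_imp_left.2 fun h =>
          (ihl hl).2 (hchild h false (show 1 < l.numLeaves by omega)))
    · rw [topCard_eq_zero hl]
      have hkr : (k : ℝ) < r.numLeaves := by exact_mod_cast hr
      have := mul_add_le_of_one_large (by positivity) (by positivity) hl₀ hcβ hkr (ihr hr).1
        (or_iff_not_imp_left.2 fun h =>
          (ihr hr).2 (hchild (fun h' => h h'.symm) true (show 1 < r.numLeaves by omega)))
      simpa [add_comm, and_comm] using this
    · rw [topCard_eq_zero hl, topCard_eq_zero hr]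
      have hkn : (k : ℝ) + 1 ≤ l.numLeaves + r.numLeaves := by exact_mod_cast hkt
      constructor <;> intros <;> push_cast <;> nlinarith

end BTree

/-- The tree `top(t,k)` obtained from a `β`-balanced full
binary tree `t` with `n` leaves by removing all nodes of leaf size at most `k`
has at most `2·c·n/k` nodes, where `c = 2·log_{1+β}(β⁻¹) + 2`. -/
theorem top_tree_small (β : ℝ) (hβ0 : 0 < β) (hβ1 : β < 1)
    (L : Type) (t : BTree L) (hbal : BTree.BetaBalanced β t)
    (n : ℕ) (hn : t.numLeaves = n) (k : ℕ) (hk : 1 ≤ k) :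
    ({p : List Bool | t.InTop k p}.ncard : ℝ) ≤
      2 * (2 * Real.logb (1 + β) β⁻¹ + 2) * (n : ℝ) / (k : ℝ) := by
  subst hn
  set c := 2 * Real.logb (1 + β) β⁻¹ + 2
  have hc : 2 ≤ c := by
    linarith [Real.logb_nonneg (b := 1 + β) (by linarith) ((one_le_inv₀ hβ0).2 hβ1.le)]
  have hcβ : 1 ≤ c * β := by linarith [one_sub_le_mul_logb_one_add hβ0 hβ1]
  rw [BTree.ncard_setOf_inTop, le_div_iff₀ (by positivity)]
  rcases lt_or_ge k t.numLeaves with hkt | hkt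
  · nlinarith [(BTree.mul_topCard_add_le hk hc hcβ t hbal hkt).1]
  · rw [BTree.topCard_eq_zero hkt]
    simp only [CharP.cast_eq_zero, zero_mul]
    positivity
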